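/- Let f : X → Y be a continuous surjection of compact Hausdorff spaces. If the induced map f₊ : M(X) → M(Y), μ ↦ μ ∘ f⁻¹, is semi-open, then f is semi-open. -/

import Mathlib

open MeasureTheory Set Filter Metric
open scoped BoundedContinuousFunction Topology

/-! Fix a nonempty open `U ⊆ X` and an Urysohn function `g` equal to `1` at a point of `U` and
to `0` off `U`. The measures with `∫ g > 1/2` form a nonempty open set `V`, and each of them
charges the closed set `C = {g ≥ 1/2} ⊆ U`; hence every measure in `f₊ V` charges the closed set
`f C ⊆ f U`. If `f U` had empty interior, `f C` would have dense complement, and then the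
measures vanishing on `f C` are dense in `M(Y)`: any measure is the limit of its pushforwards
along measurable maps into `(f C)ᶜ` that move each of finitely many test functions by arbitrarily
little (a finite cover on which the test functions oscillate little, made disjoint, each piece
sent to a point off `f C`). Such a measure in the interior of `f₊ V` is a contradiction. -/

/-- A continuous surjection `g : A → B` is *semi-open* if for every nonempty open set
`U ⊆ A`, the interior of the image `g '' U` is nonempty. -/
def SemiOpen {A B : Type*} [TopologicalSpace A] [TopologicalSpace B] (g : A → B) : Prop :=
  ∀ U : Set A, IsOpen U → U.Nonempty → (interior (g '' U)).Nonempty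

theorem Finset.exists_measurable_eq_of_mem_biUnion {α β ι : Type*} [MeasurableSpace α]
    [MeasurableSpace β] (s : Finset ι) {U : ι → Set α} (hU : ∀ i, MeasurableSet (U i))
    (c : ι → β) {φ₀ : α → β} (hφ₀ : Measurable φ₀) :
    ∃ φ : α → β, Measurable φ ∧ ∀ x ∈ ⋃ i ∈ s, U i, ∃ i ∈ s, x ∈ U i ∧ φ x = c i := by
  classical
  induction s using Finset.induction_on with
  | empty => exact ⟨φ₀, hφ₀, by simp⟩
  | insert a s _ ih =>
    obtain ⟨φ, hφ, hφc⟩ := ih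
    refine ⟨(U a).piecewise (fun _ ↦ c a) φ, measurable_const.piecewise (hU a) hφ, ?_⟩
    intro x hx
    by_cases hxa : x ∈ U a
    · exact ⟨a, Finset.mem_insert_self a s, hxa, Set.piecewise_eq_of_mem _ _ _ hxa⟩
    · rw [Finset.set_biUnion_insert] at hx
      obtain ⟨i, hi, hxi, hφx⟩ := hφc x (hx.resolve_left hxa)
      exact ⟨i, Finset.mem_insert_of_mem hi, hxi,
        (Set.piecewise_eq_of_notMem _ _ _ hxa).trans hφx⟩

theorem Dense.exists_measurable_mem_dist_lt {Y M : Type*} [TopologicalSpace Y]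
    [CompactSpace Y] [MeasurableSpace Y] [OpensMeasurableSpace Y] [PseudoMetricSpace M]
    {S : Set Y} (hS : Dense S) {G : Y → M} (hG : Continuous G) {ε : ℝ} (hε : 0 < ε) :
    ∃ φ : Y → Y, Measurable φ ∧ ∀ y, φ y ∈ S ∧ dist (G (φ y)) (G y) < ε := by
  set U : Y → Set Y := fun y ↦ G ⁻¹' ball (G y) (ε / 2)
  have hU (y : Y) : IsOpen (U y) := isOpen_ball.preimage hG
  have hmem (y : Y) : y ∈ U y := mem_ball_self (half_pos hε)
  obtain ⟨t, ht⟩ := CompactSpace.elim_nhds_subcover U fun y ↦ (hU y).mem_nhds (hmem y)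
  choose c hcU hcS using fun y ↦ hS.inter_open_nonempty (U y) (hU y) ⟨y, hmem y⟩
  obtain ⟨φ, hφ, hφc⟩ :=
    t.exists_measurable_eq_of_mem_biUnion (fun y ↦ (hU y).measurableSet) c measurable_id
  refine ⟨φ, hφ, fun x ↦ ?_⟩
  obtain ⟨y, -, hxy, hφx⟩ := hφc x (ht ▸ mem_univ x)
  rw [hφx]
  refine ⟨hcS y, ?_⟩
  calc dist (G (c y)) (G x) ≤ dist (G (c y)) (G y) + dist (G x) (G y) := dist_triangle_right ..
    _ < ε / 2 + ε / 2 := add_lt_add (hcU y) hxy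
    _ = ε := add_halves ε

namespace MeasureTheory.ProbabilityMeasure

variable {Y : Type*} [TopologicalSpace Y] [MeasurableSpace Y] [OpensMeasurableSpace Y]

theorem tendsto_map_of_tendstoUniformly {γ : Type*} {l : Filter γ} (μ : ProbabilityMeasure Y)
    {φ : γ → Y → Y} (hφ : ∀ i, Measurable (φ i))
    (h : ∀ g : Y →ᵇ ℝ, TendstoUniformly (fun i ↦ g ∘ φ i) g l) :
    Tendsto (fun i ↦ μ.map (hφ i).aemeasurable) l (𝓝 μ) := by
  rw [tendsto_iff_forall_integral_tendsto]
  intro g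
  rw [Metric.tendsto_nhds]
  intro δ hδ
  filter_upwards [Metric.tendstoUniformly_iff.1 (h g) (δ / 2) (half_pos hδ)] with i hi
  have hmap : ∫ y, g y ∂(μ.map (hφ i).aemeasurable) = ∫ x, g (φ i x) ∂μ := by
    rw [toMeasure_map, integral_map (hφ i).aemeasurable g.continuous.aestronglyMeasurable]
  have hcomp : Integrable (fun x ↦ g (φ i x)) μ :=
    (g.integrable ((μ : Measure Y).map (φ i))).comp_measurable (hφ i)
  rw [hmap, dist_eq_norm, ← integral_sub hcomp (g.integrable μ)]
  calc ‖∫ x, g (φ i x) - g x ∂μ‖ ≤ δ / 2 * (μ : Measure Y).real univ :=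
        norm_integral_le_of_norm_le_const <| Eventually.of_forall fun x ↦ by
          rw [← dist_eq_norm, dist_comm]; exact (hi x).le
    _ < δ := by simp [hδ]

theorem dense_setOf_measure_eq_zero [CompactSpace Y] {K : Set Y} (hK : MeasurableSet K)
    (hKc : Dense Kᶜ) : Dense {ν : ProbabilityMeasure Y | (ν : Measure Y) K = 0} := by
  classical
  intro μ
  -- approximate `μ` along the net indexed by (finite set of test functions, precision index)
  have (i : Finset (Y →ᵇ ℝ) × ℕ) : ∃ φ : Y → Y, Measurable φ ∧ ∀ y, φ y ∈ Kᶜ ∧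
      ∀ g ∈ i.1, dist (g y) (g (φ y)) < 1 / (i.2 + 1) := by
    obtain ⟨φ, hφ, hφK⟩ := hKc.exists_measurable_mem_dist_lt (G := fun y (g : i.1) ↦ g.1 y)
      (_root_.continuous_pi fun g ↦ g.1.continuous) Nat.one_div_pos_of_nat
    refine ⟨φ, hφ, fun y ↦ ⟨(hφK y).1, fun g hg ↦ ?_⟩⟩
    rw [dist_comm]
    exact (dist_le_pi_dist _ _ ⟨g, hg⟩).trans_lt (hφK y).2
  choose φ hφ hφK hφF using this
  refine mem_closure_of_tendsto (μ.tendsto_map_of_tendstoUniformly (l := atTop) hφ fun g ↦ ?_)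
    (Eventually.of_forall fun i ↦ ?_)
  · rw [Metric.tendstoUniformly_iff]
    intro ε hε
    obtain ⟨N, hN⟩ := exists_nat_one_div_lt hε
    filter_upwards [eventually_ge_atTop ({g}, N)] with i hi y
    calc dist (g y) (g (φ i y)) < 1 / (i.2 + 1) :=
          hφF i y g (hi.1 (Finset.mem_singleton_self g))
      _ ≤ 1 / (N + 1) := by gcongr; exact_mod_cast hi.2
      _ < ε := hN
  · show (μ.map (hφ i).aemeasurable : Measure Y) K = 0
    rw [toMeasure_map, Measure.map_apply (hφ i) hK]
    exact measure_mono_null (fun y hy ↦ hφK i y hy) measure_empty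

theorem exists_isClosed_subset_forall_measure_pos {X : Type*} [TopologicalSpace X]
    [NormalSpace X] [T1Space X] [MeasurableSpace X] [OpensMeasurableSpace X] {U : Set X}
    (hU : IsOpen U) (hne : U.Nonempty) :
    ∃ C ⊆ U, IsClosed C ∧ ∃ V : Set (ProbabilityMeasure X), IsOpen V ∧ V.Nonempty ∧
      ∀ μ ∈ V, 0 < (μ : Measure X) C := by
  obtain ⟨x₀, hx₀⟩ := hne
  obtain ⟨g, hgU, hgx₀, -⟩ := exists_bounded_zero_one_of_closed hU.isClosed_compl
    isClosed_singleton (disjoint_singleton_right.2 (not_not.2 hx₀))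
  refine ⟨{x | 1 / 2 ≤ g x}, fun x (hx : 1 / 2 ≤ g x) ↦ ?_,
    isClosed_le continuous_const g.continuous, {μ | 1 / 2 < ∫ x, g x ∂μ},
    isOpen_lt continuous_const (continuous_integral_boundedContinuousFunction g),
    ⟨⟨Measure.dirac x₀, inferInstance⟩, ?_⟩, fun μ (hμ : 1 / 2 < ∫ x, g x ∂μ) ↦ ?_⟩
  · by_contra hxU
    linarith [show g x = 0 from hgU hxU]
  · show 1 / 2 < ∫ x, g x ∂(Measure.dirac x₀)
    rw [integral_dirac' _ _ g.continuous.stronglyMeasurable, hgx₀ rfl]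
    norm_num
  · calc 0 < (μ : Measure X) {x | ∫ y, g y ∂μ ≤ g x} := measure_integral_le_pos (g.integrable μ)
      _ ≤ (μ : Measure X) {x | 1 / 2 ≤ g x} := measure_mono fun x hx ↦ hμ.le.trans hx

end MeasureTheory.ProbabilityMeasure

theorem semiOpen_of_semiOpen_pushforward
    {X Y : Type*} [TopologicalSpace X] [CompactSpace X] [T2Space X]
    [MeasurableSpace X] [BorelSpace X]
    [TopologicalSpace Y] [CompactSpace Y] [T2Space Y]
    [MeasurableSpace Y] [BorelSpace Y]
    {f : X → Y} (hf : Continuous f)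
    (h : SemiOpen (fun μ : MeasureTheory.ProbabilityMeasure X =>
      μ.map hf.measurable.aemeasurable)) :
    SemiOpen f := by
  intro U hU hne
  obtain ⟨C, hCU, hC, V, hV, hVne, hVC⟩ :=
    ProbabilityMeasure.exists_isClosed_subset_forall_measure_pos hU hne
  have hW := h V hV hVne
  by_contra hempty
  have hK : IsClosed (f '' C) := (hC.isCompact.image hf).isClosed
  have hKc : Dense (f '' C)ᶜ := by
    rw [← interior_eq_empty_iff_dense_compl, ← subset_empty_iff,
      ← not_nonempty_iff_eq_empty.1 hempty]
    exact interior_mono (image_mono hCU)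
  have hS := ProbabilityMeasure.dense_setOf_measure_eq_zero hK.measurableSet hKc
  obtain ⟨ν, hνW, hνK⟩ := hS.inter_open_nonempty _ isOpen_interior hW
  obtain ⟨μ, hμV, rfl⟩ := interior_subset hνW
  have hCK : (μ : Measure X) C ≤ (μ : Measure X) (f ⁻¹' (f '' C)) :=
    measure_mono (subset_preimage_image f C)
  exact (hVC μ hμV).trans_le (hCK.trans (Measure.le_map_apply hf.aemeasurable _)) |>.ne' hνK
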